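/- arXiv:1304.7041 — 4 statements merged into one kernel-verified Lean document; each statement's English description precedes it below -/
import Mathlib

section
/- Fix $n \ge 2$ and $r_s > 0$, and let $b(r) = r(r^{n-1} + r_s^{n-1})$ on $(0, r_s)$. Then $\beta_0(r) := \int_r^{r_s} \frac{ds}{b(s)} = \frac{-1}{(n-1)r_s^{n-1}} \ln\left(\frac{2 r^{n-1}}{r^{n-1} + r_s^{n-1}}\right)$, and with $a(r) = \frac{r^{2n-1}}{r^{n-1} + r_s^{n-1}}$ one has $\int_0^{r_s} \beta_0(r)^2 a(r)\,dr < \infty$, while $\int_0^{r_s} \frac{dr}{b(r)} = +\infty$. -/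
/-!
Write `m = n - 1` and `c = r_s ^ m`. The function `log (s^m / (s^m + c)) / (m c)` is a primitive
of `1 / b`, which gives the closed form of `β₀`. On `(0, r_s)` one has `c ≤ s^m + c ≤ 2c`, so
`1 / b` is comparable to `1 / (c s)`: hence `∫₀ 1/b` diverges like `∫₀ ds/s`, and
`β₀ r ≤ log (r_s / r) / c`. Together with `a r ≤ c r` this bounds `β₀² a` by
`log (r_s / r)² r / c ≤ 4 r_s / c`, using `log x ≤ 2 √x`, so `β₀² a` is bounded on an interval
of finite length.
-/

open MeasureTheory Set Filter Real
open scoped Interval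

namespace AntiSchwarzschild

-- `m` stands for `n - 1` and `t` for `r_s`.

noncomputable def b (m : ℕ) (t s : ℝ) : ℝ := s * (s ^ m + t ^ m)

noncomputable def a (m : ℕ) (t r : ℝ) : ℝ := r ^ (2 * m + 1) / (r ^ m + t ^ m)

noncomputable def β₀ (m : ℕ) (t r : ℝ) : ℝ := ∫ s in r..t, 1 / b m t s

variable {m : ℕ} {t r s : ℝ}

lemma b_pos (ht : 0 ≤ t) (hs : 0 < s) : 0 < b m t s := by
  unfold b; positivity

lemma continuousOn_one_div_b (ht : 0 ≤ t) : ContinuousOn (fun s => 1 / b m t s) (Ioi 0) :=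
  continuousOn_const.div (by unfold b; fun_prop) fun _ hs => (b_pos ht hs).ne'

lemma hasDerivAt_log_pow_div (hm : m ≠ 0) (ht : 0 < t) (hs : 0 < s) :
    HasDerivAt (fun x => log (x ^ m / (x ^ m + t ^ m)) / (m * t ^ m)) (1 / b m t s) s := by
  have hsum : 0 < s ^ m + t ^ m := by positivity
  have hq : HasDerivAt (fun x => x ^ m / (x ^ m + t ^ m))
      ((m * s ^ (m - 1) * (s ^ m + t ^ m) - s ^ m * (m * s ^ (m - 1))) / (s ^ m + t ^ m) ^ 2) s :=
    (hasDerivAt_pow m s).div ((hasDerivAt_pow m s).add_const (t ^ m)) hsum.ne'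
  refine ((hq.log (div_pos (pow_pos hs m) hsum).ne').div_const _).congr_deriv ?_
  rw [b, ← mul_pow_sub_one hm s]
  have : (0 : ℝ) < s ^ (m - 1) := by positivity
  field_simp
  ring

lemma β₀_eq (hm : m ≠ 0) (ht : 0 < t) (hr : 0 < r) :
    β₀ m t r = -1 / (m * t ^ m) * log (2 * r ^ m / (r ^ m + t ^ m)) := by
  have hpos : ∀ x ∈ [[r, t]], 0 < x := fun x hx => lt_min hr ht |>.trans_le hx.1
  rw [β₀, intervalIntegral.integral_eq_sub_of_hasDerivAt
    (fun x hx => hasDerivAt_log_pow_div hm ht (hpos x hx))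
    ((continuousOn_one_div_b ht.le).mono hpos).intervalIntegrable]
  have hrm : 0 < r ^ m := by positivity
  have htm : 0 < t ^ m := by positivity
  rw [← two_mul, div_mul_cancel_right₀ htm.ne', log_inv, log_div hrm.ne' (by positivity),
    log_div (by positivity) (by positivity), log_mul two_ne_zero hrm.ne']
  ring

lemma β₀_nonneg (ht : 0 ≤ t) (hr : 0 < r) (hrt : r ≤ t) : 0 ≤ β₀ m t r :=
  intervalIntegral.integral_nonneg hrt fun _ hs => (one_div_pos.2 (b_pos ht (hr.trans_le hs.1))).le

lemma β₀_le_log_div (ht : 0 < t) (hr : 0 < r) (hrt : r ≤ t) :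
    β₀ m t r ≤ log (t / r) / t ^ m := by
  have hpos : ∀ x ∈ [[r, t]], 0 < x := fun x hx => lt_min hr ht |>.trans_le hx.1
  calc β₀ m t r ≤ ∫ s in r..t, (t ^ m)⁻¹ * s⁻¹ := by
        refine intervalIntegral.integral_mono_on hrt
          ((continuousOn_one_div_b ht.le).mono hpos).intervalIntegrable
          (continuousOn_const.mul
            (continuousOn_inv₀.mono fun x hx => (hpos x hx).ne')).intervalIntegrable
          fun s hs => ?_
        have hs0 : 0 < s := hr.trans_le hs.1
        rw [b, ← mul_inv, one_div]
        refine inv_anti₀ (by positivity) ?_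
        nlinarith [pow_pos hs0 m]
    _ = log (t / r) / t ^ m := by
        rw [intervalIntegral.integral_const_mul, integral_inv_of_pos hr ht, inv_mul_eq_div]

lemma a_nonneg (ht : 0 ≤ t) (hr : 0 ≤ r) : 0 ≤ a m t r := by
  unfold a; positivity

lemma a_le (ht : 0 < t) (hr : 0 ≤ r) (hrt : r ≤ t) : a m t r ≤ r * t ^ m := by
  have hrm : r ^ m ≤ t ^ m := pow_le_pow_left₀ hr hrt m
  have htm : 0 < t ^ m := by positivity
  rw [a, div_le_iff₀ (by positivity), pow_succ, pow_mul']
  nlinarith [mul_le_mul_of_nonneg_left hrm (mul_nonneg hr (pow_nonneg hr m)),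
    mul_nonneg hr (mul_nonneg htm.le htm.le)]

lemma log_sq_le_four_mul {x : ℝ} (hx : 1 ≤ x) : log x ^ 2 ≤ 4 * x := by
  have h := log_le_rpow_div (zero_le_one.trans hx) one_half_pos
  rw [← sqrt_eq_rpow] at h
  nlinarith [sq_sqrt (zero_le_one.trans hx), log_nonneg hx]

lemma β₀_sq_mul_a_le (ht : 0 < t) (hr : 0 < r) (hrt : r ≤ t) :
    β₀ m t r ^ 2 * a m t r ≤ 4 * t / t ^ m := by
  have htm : 0 < t ^ m := by positivity
  have hlog : log (t / r) ^ 2 * r ≤ 4 * t := by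
    have := log_sq_le_four_mul ((one_le_div hr).2 hrt)
    calc log (t / r) ^ 2 * r ≤ 4 * (t / r) * r := by gcongr
      _ = 4 * t := by field_simp
  calc β₀ m t r ^ 2 * a m t r ≤ (log (t / r) / t ^ m) ^ 2 * (r * t ^ m) := by
        exact mul_le_mul (pow_le_pow_left₀ (β₀_nonneg ht.le hr hrt) (β₀_le_log_div ht hr hrt) 2)
          (a_le ht hr.le hrt) (a_nonneg ht.le hr.le) (by positivity)
    _ = log (t / r) ^ 2 * r / t ^ m := by field_simp
    _ ≤ 4 * t / t ^ m := by gcongr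

lemma continuousOn_β₀ (hm : m ≠ 0) (ht : 0 < t) : ContinuousOn (β₀ m t) (Ioi 0) := by
  refine ContinuousOn.congr ?_ fun r (hr : 0 < r) => β₀_eq hm ht hr
  refine continuousOn_const.mul (ContinuousOn.log ?_ fun r (hr : 0 < r) => by positivity)
  exact ContinuousOn.div (by fun_prop) (by fun_prop) fun r (hr : 0 < r) => by positivity

lemma integrableOn_β₀_sq_mul_a (hm : m ≠ 0) (ht : 0 < t) :
    IntegrableOn (fun r => β₀ m t r ^ 2 * a m t r) (Ioo 0 t) := by
  have hcont : ContinuousOn (fun r => β₀ m t r ^ 2 * a m t r) (Ioo 0 t) := by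
    refine (((continuousOn_β₀ hm ht).mono Ioo_subset_Ioi_self).pow 2).mul ?_
    exact ContinuousOn.div (by fun_prop) (by fun_prop) fun r hr => by have := hr.1; positivity
  refine .of_bound measure_Ioo_lt_top (hcont.aestronglyMeasurable measurableSet_Ioo)
    (4 * t / t ^ m) ((ae_restrict_iff' measurableSet_Ioo).2 (.of_forall fun r hr => ?_))
  have hβa : 0 ≤ β₀ m t r ^ 2 * a m t r := mul_nonneg (sq_nonneg _) (a_nonneg ht.le hr.1.le)
  rw [Real.norm_of_nonneg hβa]
  exact β₀_sq_mul_a_le ht hr.1 hr.2.le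

lemma not_integrableOn_one_div_b (ht : 0 < t) :
    ¬ IntegrableOn (fun s => 1 / b m t s) (Ioo 0 t) := by
  intro h
  have hinv : IntegrableOn (fun s : ℝ => s⁻¹) (Ioo 0 t) := by
    refine (h.const_mul (2 * t ^ m)).mono'
      ((continuousOn_inv₀.mono fun s (hs : s ∈ Ioo 0 t) => hs.1.ne').aestronglyMeasurable
        measurableSet_Ioo) ?_
    refine (ae_restrict_iff' measurableSet_Ioo).2 (.of_forall fun s hs => ?_)
    have hs0 : 0 < s := hs.1
    have hsm : s ^ m ≤ t ^ m := pow_le_pow_left₀ hs0.le hs.2.le m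
    rw [Real.norm_of_nonneg (inv_nonneg.2 hs0.le), b, mul_one_div, le_div_iff₀ (by positivity)]
    field_simp
    linarith
  have := (intervalIntegrable_iff_integrableOn_Ioo_of_le ht.le).2 hinv
  simp [intervalIntegrable_inv_iff, ht.ne] at this

end AntiSchwarzschild

open AntiSchwarzschild

/-- Anti-Schwarzschild coefficients: with
`b(r) = r (r^{n-1} + r_s^{n-1})` and `a(r) = r^{2n-1}/(r^{n-1} + r_s^{n-1})` on
`(0, r_s)`, one has the explicit formula for `β₀(r) = ∫_r^{r_s} ds/b(s)`, the
finiteness `∫_0^{r_s} β₀² a < ∞`, and the divergence `∫_0^{r_s} dr/b(r) = ∞`. -/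
theorem stmt12
    (n : ℕ) (hn : 2 ≤ n) (rs : ℝ) (hrs : 0 < rs)
    (a b : ℝ → ℝ)
    (ha : ∀ r ∈ Set.Ioo (0 : ℝ) rs, a r = r ^ (2 * n - 1) / (r ^ (n - 1) + rs ^ (n - 1)))
    (hb : ∀ r ∈ Set.Ioo (0 : ℝ) rs, b r = r * (r ^ (n - 1) + rs ^ (n - 1))) :
    (∀ r ∈ Set.Ioo (0 : ℝ) rs,
      (∫ s in r..rs, 1 / b s) =
        (-1) / ((n - 1) * rs ^ (n - 1)) *
          Real.log (2 * r ^ (n - 1) / (r ^ (n - 1) + rs ^ (n - 1)))) ∧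
    IntegrableOn (fun r => (∫ s in r..rs, 1 / b s) ^ 2 * a r) (Set.Ioo (0 : ℝ) rs) ∧
    ¬ IntegrableOn (fun r => 1 / b r) (Set.Ioo (0 : ℝ) rs) := by
  obtain ⟨m, rfl⟩ : ∃ m, n = m + 1 := ⟨n - 1, by omega⟩
  have hm : m ≠ 0 := by omega
  have hexp : 2 * (m + 1) - 1 = 2 * m + 1 := by omega
  simp only [Nat.add_sub_cancel, hexp, Nat.cast_add, Nat.cast_one, add_sub_cancel_right] at ha hb ⊢
  have hb' : EqOn (fun s => 1 / b s) (fun s => 1 / AntiSchwarzschild.b m rs s) (Ioo 0 rs) :=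
    fun s hs => by simp only [hb s hs, AntiSchwarzschild.b]
  have hβ : ∀ r ∈ Ioo 0 rs, ∫ s in r..rs, 1 / b s = β₀ m rs r := fun r hr =>
    intervalIntegral.integral_congr_Ioo_of_le hr.2.le (hb'.mono (Ioo_subset_Ioo_left hr.1.le))
  refine ⟨fun r hr => (hβ r hr).trans (β₀_eq hm hrs hr.1), ?_, ?_⟩
  · refine (integrableOn_β₀_sq_mul_a hm hrs).congr_fun (fun r hr => ?_) measurableSet_Ioo
    simp only [hβ r hr, ha r hr, AntiSchwarzschild.a]
  · rw [integrableOn_congr_fun hb' measurableSet_Ioo]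
    exact not_integrableOn_one_div_b hrs
end

section
/- Fix $n \ge 2$ and $r_* > 0$, and on $(0, r_*)$ set $a(r) = \frac{r^{3n-2}}{(r^{n-1} - r_*^{n-1})^2}$, $b(r) = \frac{(r^{n-1} - r_*^{n-1})^2}{r^{n-2}}$, $d(r) = m^2 r^n$ with $m \ge 0$. Then $\int_0^{r_*/2} \left(\frac{1}{b(z)} + d(z) + a(z)\right) dz < +\infty$, while $\int_{r_*/2}^{r_*} a(r)\,dr = +\infty$. -/
/-!
On `[0, r_*/2]` the horizon is out of reach, so `1/b + d + a` extends continuously to the compact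
interval and is integrable. Near the horizon, `r_*^(n-1) - r^(n-1) ≤ (n-1) r_*^(n-2) (r_* - r)`,
so `a(r)` dominates a multiple of `(r_* - r)⁻²`, which is not integrable up to `r_*`.
-/

open MeasureTheory Set

lemma not_integrableOn_Ioo_inv_sub_sq {a b : ℝ} (hab : a < b) :
    ¬ IntegrableOn (fun r => ((b - r) ^ 2)⁻¹) (Ioo a b) := by
  intro h
  -- dominate `(r - b)⁻¹`, whose integral diverges logarithmically at `b`
  have hinv : IntegrableOn (fun r => (r - b)⁻¹) (Ioo a b) := by
    refine (h.const_mul (b - a)).mono' (by fun_prop) ?_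
    refine ae_restrict_of_forall_mem measurableSet_Ioo fun r hr => ?_
    have hbr : 0 < b - r := sub_pos.2 hr.2
    calc ‖(r - b)⁻¹‖ = (b - r) * ((b - r) ^ 2)⁻¹ := by
          rw [norm_inv, Real.norm_eq_abs, abs_sub_comm, abs_of_pos hbr]; field_simp
      _ ≤ (b - a) * ((b - r) ^ 2)⁻¹ := by gcongr; exact hr.1.le
  rw [← intervalIntegrable_iff_integrableOn_Ioo_of_le hab.le,
    intervalIntegrable_sub_inv_iff] at hinv
  exact hinv.elim hab.ne fun h => h right_mem_uIcc

lemma not_integrableOn_Ioo_of_const_mul_inv_sub_sq_le {f : ℝ → ℝ} {a b C : ℝ} (hab : a < b)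
    (hC : 0 < C) (hf : ∀ r ∈ Ioo a b, C * ((b - r) ^ 2)⁻¹ ≤ f r) :
    ¬ IntegrableOn f (Ioo a b) := by
  refine fun h => not_integrableOn_Ioo_inv_sub_sq hab ((h.const_mul C⁻¹).mono' (by fun_prop) ?_)
  refine ae_restrict_of_forall_mem measurableSet_Ioo fun r hr => ?_
  rw [Real.norm_of_nonneg (by positivity), le_inv_mul_iff₀ hC]
  exact hf r hr

section

variable {r R : ℝ} {k : ℕ}

lemma pow_sub_pow_ne_zero_of_lt (hr : 0 ≤ r) (hrR : r < R) (hk : k ≠ 0) : r ^ k - R ^ k ≠ 0 :=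
  sub_ne_zero.2 (pow_lt_pow_left₀ hrR hr hk).ne

lemma sq_pow_sub_pow_le (hr : 0 ≤ r) (hrR : r ≤ R) :
    (r ^ k - R ^ k) ^ 2 ≤ (k * R ^ (k - 1)) ^ 2 * (R - r) ^ 2 := by
  have h := abs_pow_sub_pow_le r R k
  rw [abs_of_nonneg hr, abs_of_nonneg (hr.trans hrR), max_eq_right hrR] at h
  calc (r ^ k - R ^ k) ^ 2 = |r ^ k - R ^ k| ^ 2 := (sq_abs _).symm
    _ ≤ (|r - R| * k * R ^ (k - 1)) ^ 2 := by gcongr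
    _ = (k * R ^ (k - 1)) ^ 2 * (R - r) ^ 2 := by
      rw [abs_sub_comm, abs_of_nonneg (sub_nonneg.2 hrR)]; ring

lemma const_mul_inv_sub_sq_le_div_sq_pow_sub_pow {c : ℝ} (p : ℕ) (hc : 0 < c) (hcr : c ≤ r)
    (hrR : r < R) (hk : k ≠ 0) :
    c ^ p / (k * R ^ (k - 1)) ^ 2 * ((R - r) ^ 2)⁻¹ ≤ r ^ p / (r ^ k - R ^ k) ^ 2 := by
  have hr : 0 < r := hc.trans_le hcr
  have hden : 0 < (r ^ k - R ^ k) ^ 2 := by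
    have := pow_sub_pow_ne_zero_of_lt hr.le hrR hk
    positivity
  calc c ^ p / (k * R ^ (k - 1)) ^ 2 * ((R - r) ^ 2)⁻¹
      = c ^ p / ((k * R ^ (k - 1)) ^ 2 * (R - r) ^ 2) := by rw [← div_eq_mul_inv, div_div]
    _ ≤ r ^ p / (r ^ k - R ^ k) ^ 2 :=
      div_le_div₀ (by positivity) (pow_le_pow_left₀ hc.le hcr p) hden
        (sq_pow_sub_pow_le hr.le hrR.le)

lemma continuousOn_pow_div_sq_pow_sub_pow {c : ℝ} (p : ℕ) (hcR : c < R) (hk : k ≠ 0) :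
    ContinuousOn (fun z => z ^ p / (z ^ k - R ^ k) ^ 2) (Icc 0 c) :=
  (continuousOn_pow p).div (by fun_prop) fun z hz =>
    pow_ne_zero 2 (pow_sub_pow_ne_zero_of_lt hz.1 (hz.2.trans_lt hcR) hk)

end

theorem stmt14_general
    (n : ℕ) (hn : 2 ≤ n) (rstar : ℝ) (hrstar : 0 < rstar) (m : ℝ)
    (a b d : ℝ → ℝ)
    (ha : ∀ r ∈ Set.Ioo (0 : ℝ) rstar,
      a r = r ^ (3 * n - 2) / (r ^ (n - 1) - rstar ^ (n - 1)) ^ 2)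
    (hb : ∀ r ∈ Set.Ioo (0 : ℝ) rstar,
      b r = (r ^ (n - 1) - rstar ^ (n - 1)) ^ 2 / r ^ (n - 2))
    (hd : ∀ r ∈ Set.Ioo (0 : ℝ) rstar, d r = m ^ 2 * r ^ n) :
    IntegrableOn (fun z => 1 / b z + d z + a z) (Set.Ioo (0 : ℝ) (rstar / 2)) ∧
    ¬ IntegrableOn a (Set.Ioo (rstar / 2) rstar) := by
  have hk : n - 1 ≠ 0 := by omega
  have hhalf : rstar / 2 < rstar := half_lt_self hrstar
  constructor
  · have hcont : ContinuousOn (fun z => z ^ (n - 2) / (z ^ (n - 1) - rstar ^ (n - 1)) ^ 2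
        + m ^ 2 * z ^ n + z ^ (3 * n - 2) / (z ^ (n - 1) - rstar ^ (n - 1)) ^ 2)
        (Icc 0 (rstar / 2)) :=
      ((continuousOn_pow_div_sq_pow_sub_pow _ hhalf hk).add (by fun_prop)).add
        (continuousOn_pow_div_sq_pow_sub_pow _ hhalf hk)
    refine (hcont.integrableOn_Icc.mono_set Ioo_subset_Icc_self).congr_fun
      (fun z hz => ?_) measurableSet_Ioo
    have hz' : z ∈ Ioo 0 rstar := ⟨hz.1, hz.2.trans hhalf⟩
    simp only [hb z hz', hd z hz', ha z hz', one_div_div]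
  · refine not_integrableOn_Ioo_of_const_mul_inv_sub_sq_le hhalf
      (C := (rstar / 2) ^ (3 * n - 2) / ((n - 1 : ℕ) * rstar ^ (n - 1 - 1)) ^ 2)
      (by positivity) fun r hr => ?_
    rw [ha r ⟨(half_pos hrstar).trans hr.1, hr.2⟩]
    exact const_mul_inv_sub_sq_le_div_sq_pow_sub_pow _ (half_pos hrstar) hr.1.le hr.2 hk

/-- Extreme Reissner–Nordström interior: with
`a(r) = r^{3n-2}/(r^{n-1} - r_*^{n-1})²`, `b(r) = (r^{n-1} - r_*^{n-1})²/r^{n-2}`,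
`d(r) = m² rⁿ` on `(0, r_*)`, one has `∫_0^{r_*/2} (1/b + d + a) < ∞` while
`∫_{r_*/2}^{r_*} a = ∞`. -/
theorem stmt14
    (n : ℕ) (hn : 2 ≤ n) (rstar : ℝ) (hrstar : 0 < rstar) (m : ℝ) (hm : 0 ≤ m)
    (a b d : ℝ → ℝ)
    (ha : ∀ r ∈ Set.Ioo (0 : ℝ) rstar,
      a r = r ^ (3 * n - 2) / (r ^ (n - 1) - rstar ^ (n - 1)) ^ 2)
    (hb : ∀ r ∈ Set.Ioo (0 : ℝ) rstar,
      b r = (r ^ (n - 1) - rstar ^ (n - 1)) ^ 2 / r ^ (n - 2))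
    (hd : ∀ r ∈ Set.Ioo (0 : ℝ) rstar, d r = m ^ 2 * r ^ n) :
    IntegrableOn (fun z => 1 / b z + d z + a z) (Set.Ioo (0 : ℝ) (rstar / 2)) ∧
    ¬ IntegrableOn a (Set.Ioo (rstar / 2) rstar) :=
  stmt14_general n hn rstar hrstar m a b d ha hb hd
end

section
/- Let $b : (0,\infty) \to (0,\infty)$ be continuous and $a : (0,\infty) \to (0,\infty)$ locally integrable with $\int^{+\infty}(1/b(z) + a(z))\,dz < +\infty$. Then every $u \in H^1_{loc}((0,\infty))$ with $\int_0^\infty (b|u'|^2 + a|u|^2) < \infty$ satisfies: $u'$ is integrable on $[z', \infty)$ for each $z' > 0$ and $\lim_{z \to \infty} u(z)$ exists (possibly nonzero). Consequently, the set of compactly supported functions in the weighted space $\mathcal{E}_0 = \{u : \int_0^\infty(b|u'|^2 + a|u|^2) < \infty\}$ is NOT dense in $\mathcal{E}_0$. -/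
open MeasureTheory Set Filter Topology

/-!
Since `∫^∞ 1/b < ∞`, Cauchy–Schwarz (in the weighted AM–GM form `2|g| ≤ c b g² + (c b)⁻¹`)
bounds `∫_z^∞ |u'|` by the energy of `u`, so `u'` is integrable near infinity and `u` has a
limit `ℓ(u)` there. Since moreover `∫^∞ a < ∞`, a function of small energy is small at some point
beyond `z₀`, and oscillates little beyond that point: `ℓ` is continuous for the energy norm.
A smooth cutoff equal to `1` near infinity has `ℓ = 1`, whereas `ℓ` vanishes on compactly
supported functions, so these stay at a positive energy distance from the cutoff.
-/

theorem abs_le_mul_sq_add_inv_div_two {c β : ℝ} (hc : 0 < c) (hβ : 0 < β) (x : ℝ) :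
    |x| ≤ (c * (β * x ^ 2) + c⁻¹ * (1 / β)) / 2 := by
  have key : c * β * (c * (β * x ^ 2) + c⁻¹ * (1 / β) - 2 * |x|) = (c * β * |x| - 1) ^ 2 := by
    rw [← sq_abs x]; field_simp; ring
  nlinarith [sq_nonneg (c * β * |x| - 1), mul_pos hc hβ]

theorem integrableOn_Ici_of_continuousOn_Icc {E : Type*} [NormedAddCommGroup E] {f : ℝ → E}
    {x y : ℝ} (hf : ContinuousOn f (Icc x y)) (hy : IntegrableOn f (Ioi y)) :
    IntegrableOn f (Ici x) :=
  ((hf.integrableOn_compact isCompact_Icc).union hy).mono_set Ici_subset_Icc_union_Ioi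

section WeightedL1

variable {α : Type*} [MeasurableSpace α] {μ : Measure α} {s : Set α} {b g : α → ℝ}

theorem integrableOn_of_integrableOn_mul_sq (hs : MeasurableSet s) (hb : ∀ x ∈ s, 0 < b x)
    (hg : AEStronglyMeasurable g (μ.restrict s)) (hbg : IntegrableOn (fun x => b x * g x ^ 2) s μ)
    (hb_inv : IntegrableOn (fun x => 1 / b x) s μ) : IntegrableOn g s μ := by
  refine ((hbg.add hb_inv).div_const 2).mono' hg ?_
  filter_upwards [ae_restrict_mem hs] with x hx
  simpa using abs_le_mul_sq_add_inv_div_two one_pos (hb x hx) (g x)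

theorem setIntegral_abs_le_of_weight (hs : MeasurableSet s) (hb : ∀ x ∈ s, 0 < b x)
    (hg : AEStronglyMeasurable g (μ.restrict s)) (hbg : IntegrableOn (fun x => b x * g x ^ 2) s μ)
    (hb_inv : IntegrableOn (fun x => 1 / b x) s μ) {c : ℝ} (hc : 0 < c) :
    ∫ x in s, |g x| ∂μ ≤
      (c * (∫ x in s, b x * g x ^ 2 ∂μ) + c⁻¹ * ∫ x in s, 1 / b x ∂μ) / 2 := by
  have hsum : IntegrableOn (fun x => c * (b x * g x ^ 2) + c⁻¹ * (1 / b x)) s μ :=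
    (hbg.const_mul c).add (hb_inv.const_mul c⁻¹)
  calc ∫ x in s, |g x| ∂μ
      ≤ ∫ x in s, (c * (b x * g x ^ 2) + c⁻¹ * (1 / b x)) / 2 ∂μ :=
        setIntegral_mono_on (integrableOn_of_integrableOn_mul_sq hs hb hg hbg hb_inv).abs
          (hsum.div_const 2) hs fun x hx => abs_le_mul_sq_add_inv_div_two hc (hb x hx) (g x)
    _ = _ := by
        rw [integral_div, integral_add (hbg.const_mul c) (hb_inv.const_mul c⁻¹),
          integral_const_mul, integral_const_mul]

end WeightedL1

theorem exists_lt_div_of_setIntegral_mul_lt {α : Type*} [MeasurableSpace α] {μ : Measure α}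
    {s : Set α} {a h : α → ℝ} {c : ℝ} (hs : MeasurableSet s) (ha : ∀ x ∈ s, 0 ≤ a x)
    (ha_int : IntegrableOn a s μ) (hah : IntegrableOn (fun x => a x * h x) s μ)
    (hA : 0 < ∫ x in s, a x ∂μ) (hlt : ∫ x in s, a x * h x ∂μ < c) :
    ∃ x ∈ s, h x < c / ∫ x in s, a x ∂μ := by
  by_contra! hge
  have : c ≤ ∫ x in s, a x * h x ∂μ :=
    calc c = ∫ x in s, a x * (c / ∫ x in s, a x ∂μ) ∂μ := by
          rw [integral_mul_const, mul_div_cancel₀ _ hA.ne']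
      _ ≤ ∫ x in s, a x * h x ∂μ :=
          setIntegral_mono_on (ha_int.mul_const _) hah hs
            fun x hx => mul_le_mul_of_nonneg_left (hge x hx) (ha x hx)
  linarith

noncomputable def energyDensity (a b u : ℝ → ℝ) (z : ℝ) : ℝ :=
  b z * deriv u z ^ 2 + a z * u z ^ 2

def FiniteEnergy (a b u : ℝ → ℝ) : Prop :=
  DifferentiableOn ℝ u (Ioi 0) ∧ IntegrableOn (energyDensity a b u) (Ioi 0)

noncomputable def energy (a b u : ℝ → ℝ) : ℝ :=
  ∫ z in Ioi 0, energyDensity a b u z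

section Energy

variable {a b u v : ℝ → ℝ}

theorem energyDensity_nonneg {z : ℝ} (ha : 0 ≤ a z) (hb : 0 ≤ b z) :
    0 ≤ energyDensity a b u z := by
  unfold energyDensity; positivity

theorem energyDensity_sub_eqOn (hu : DifferentiableOn ℝ u (Ioi 0))
    (hv : DifferentiableOn ℝ v (Ioi 0)) :
    EqOn (energyDensity a b (u - v))
      (fun z => b z * (deriv u z - deriv v z) ^ 2 + a z * (u z - v z) ^ 2) (Ioi 0) := by
  intro z hz
  have hdiff {w : ℝ → ℝ} (hw : DifferentiableOn ℝ w (Ioi 0)) : DifferentiableAt ℝ w z :=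
    hw.differentiableAt (Ioi_mem_nhds hz)
  simp only [energyDensity, deriv_sub (hdiff hu) (hdiff hv), Pi.sub_apply]

theorem energyDensity_sub_le {z : ℝ} (hz : z ∈ Ioi 0) (ha : 0 ≤ a z) (hb : 0 ≤ b z)
    (hu : DifferentiableOn ℝ u (Ioi 0)) (hv : DifferentiableOn ℝ v (Ioi 0)) :
    energyDensity a b (u - v) z ≤ 2 * energyDensity a b u z + 2 * energyDensity a b v z := by
  rw [energyDensity_sub_eqOn hu hv hz]
  simp only [energyDensity]
  nlinarith [mul_le_mul_of_nonneg_left (sq_nonneg (u z + v z)) ha,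
    mul_le_mul_of_nonneg_left (sq_nonneg (deriv u z + deriv v z)) hb]

namespace FiniteEnergy

theorem integrableOn_mul_deriv_sq (hb_cont : ContinuousOn b (Ioi 0))
    (ha : ∀ z ∈ Ioi (0 : ℝ), 0 ≤ a z) (hb : ∀ z ∈ Ioi (0 : ℝ), 0 < b z)
    (hu : FiniteEnergy a b u) : IntegrableOn (fun z => b z * deriv u z ^ 2) (Ioi 0) :=
  integrable_left_of_integrable_add_of_nonneg
    ((hb_cont.aestronglyMeasurable measurableSet_Ioi).mul
      ((measurable_deriv u).aestronglyMeasurable.pow 2))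
    (by filter_upwards [ae_restrict_mem measurableSet_Ioi] with z hz
        have := hb z hz; positivity)
    (by filter_upwards [ae_restrict_mem measurableSet_Ioi] with z hz
        have := ha z hz; positivity)
    hu.2

theorem integrableOn_mul_sq (hb_cont : ContinuousOn b (Ioi 0))
    (ha : ∀ z ∈ Ioi (0 : ℝ), 0 ≤ a z) (hb : ∀ z ∈ Ioi (0 : ℝ), 0 < b z)
    (hu : FiniteEnergy a b u) : IntegrableOn (fun z => a z * u z ^ 2) (Ioi 0) :=
  (hu.2.sub (hu.integrableOn_mul_deriv_sq hb_cont ha hb)).congr_fun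
    (fun z _ => by simp [energyDensity]) measurableSet_Ioi

theorem setIntegral_le_energy (hu : FiniteEnergy a b u) {f : ℝ → ℝ}
    (hf : IntegrableOn f (Ioi 0)) (hf0 : ∀ z ∈ Ioi (0 : ℝ), 0 ≤ f z)
    (hf_le : ∀ z ∈ Ioi (0 : ℝ), f z ≤ energyDensity a b u z) {s : Set ℝ} (hs0 : s ⊆ Ioi 0) :
    ∫ z in s, f z ≤ energy a b u :=
  calc ∫ z in s, f z ≤ ∫ z in Ioi 0, f z :=
        setIntegral_mono_set hf (ae_restrict_of_forall_mem measurableSet_Ioi hf0)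
          hs0.eventuallyLE
    _ ≤ energy a b u := setIntegral_mono_on hf hu.2 measurableSet_Ioi hf_le

theorem hasDerivAt (hu : FiniteEnergy a b u) {z : ℝ} (hz : 0 < z) : HasDerivAt u (deriv u z) z :=
  (hu.1.differentiableAt (Ioi_mem_nhds hz)).hasDerivAt

theorem integrableOn_deriv (hb_cont : ContinuousOn b (Ioi 0))
    (ha : ∀ z ∈ Ioi (0 : ℝ), 0 ≤ a z) (hb : ∀ z ∈ Ioi (0 : ℝ), 0 < b z)
    (hu : FiniteEnergy a b u) {s : Set ℝ} (hs : MeasurableSet s) (hs0 : s ⊆ Ioi 0)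
    (hb_inv : IntegrableOn (fun z => 1 / b z) s) : IntegrableOn (deriv u) s :=
  integrableOn_of_integrableOn_mul_sq hs (fun z hz => hb z (hs0 hz))
    (measurable_deriv u).aestronglyMeasurable
    ((hu.integrableOn_mul_deriv_sq hb_cont ha hb).mono_set hs0) hb_inv

theorem exists_tendsto (hb_cont : ContinuousOn b (Ioi 0))
    (ha : ∀ z ∈ Ioi (0 : ℝ), 0 ≤ a z) (hb : ∀ z ∈ Ioi (0 : ℝ), 0 < b z)
    (hu : FiniteEnergy a b u) {z₀ : ℝ} (hz₀ : 0 < z₀)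
    (hb_inv : IntegrableOn (fun z => 1 / b z) (Ioi z₀)) : ∃ L, Tendsto u atTop (𝓝 L) :=
  ⟨_, tendsto_limUnder_of_hasDerivAt_of_integrableOn_Ioi (fun _ hz => hu.hasDerivAt (hz₀.trans hz))
    (hu.integrableOn_deriv hb_cont ha hb measurableSet_Ioi (Ioi_subset_Ioi hz₀.le) hb_inv)⟩

theorem abs_sub_le (hb_cont : ContinuousOn b (Ioi 0))
    (ha : ∀ z ∈ Ioi (0 : ℝ), 0 ≤ a z) (hb : ∀ z ∈ Ioi (0 : ℝ), 0 < b z)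
    (hu : FiniteEnergy a b u) {z L c : ℝ} (hz : 0 < z)
    (hb_inv : IntegrableOn (fun z => 1 / b z) (Ioi z)) (hL : Tendsto u atTop (𝓝 L))
    (hc : 0 < c) :
    |L - u z| ≤ (c * energy a b u + c⁻¹ * ∫ t in Ioi z, 1 / b t) / 2 := by
  have hs0 : Ioi z ⊆ Ioi 0 := Ioi_subset_Ioi hz.le
  rw [← integral_Ioi_of_hasDerivAt_of_tendsto (hu.hasDerivAt hz).continuousAt.continuousWithinAt
    (fun t ht => hu.hasDerivAt (hz.trans ht))
    (hu.integrableOn_deriv hb_cont ha hb measurableSet_Ioi hs0 hb_inv) hL]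
  calc |∫ t in Ioi z, deriv u t| ≤ ∫ t in Ioi z, |deriv u t| := abs_integral_le_integral_abs
    _ ≤ (c * (∫ t in Ioi z, b t * deriv u t ^ 2) + c⁻¹ * ∫ t in Ioi z, 1 / b t) / 2 :=
        setIntegral_abs_le_of_weight measurableSet_Ioi (fun t ht => hb t (hs0 ht))
          (measurable_deriv u).aestronglyMeasurable
          ((hu.integrableOn_mul_deriv_sq hb_cont ha hb).mono_set hs0) hb_inv hc
    _ ≤ _ := by
        gcongr
        refine hu.setIntegral_le_energy (hu.integrableOn_mul_deriv_sq hb_cont ha hb)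
          (fun t ht => by have := hb t ht; positivity) (fun t ht => ?_) hs0
        exact le_add_of_nonneg_right (by have := ha t ht; positivity)

theorem sub (hb_cont : ContinuousOn b (Ioi 0))
    (ha_meas : AEStronglyMeasurable a (volume.restrict (Ioi 0)))
    (ha : ∀ z ∈ Ioi (0 : ℝ), 0 ≤ a z) (hb : ∀ z ∈ Ioi (0 : ℝ), 0 < b z)
    (hu : FiniteEnergy a b u) (hv : FiniteEnergy a b v) : FiniteEnergy a b (u - v) := by
  refine ⟨hu.1.sub hv.1, ((hu.2.const_mul 2).add (hv.2.const_mul 2)).mono' ?_ ?_⟩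
  · have hb_meas : AEStronglyMeasurable b (volume.restrict (Ioi 0)) :=
      hb_cont.aestronglyMeasurable measurableSet_Ioi
    have huv_meas : AEStronglyMeasurable (u - v) (volume.restrict (Ioi 0)) :=
      (hu.1.sub hv.1).continuousOn.aestronglyMeasurable measurableSet_Ioi
    exact (hb_meas.mul ((measurable_deriv _).aestronglyMeasurable.pow 2)).add
      (ha_meas.mul (huv_meas.pow 2))
  · filter_upwards [ae_restrict_mem measurableSet_Ioi] with z hz
    rw [Real.norm_of_nonneg (energyDensity_nonneg (ha z hz) (hb z hz).le)]
    exact energyDensity_sub_le hz (ha z hz) (hb z hz).le hu.1 hv.1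

end FiniteEnergy

end Energy

section Weights

variable {a b : ℝ → ℝ} {z₀ : ℝ}

theorem integrableOn_one_div_and_integrableOn_of_add (hb_cont : ContinuousOn b (Ioi 0))
    (hb : ∀ z ∈ Ioi (0 : ℝ), 0 < b z) (ha : ∀ z ∈ Ioi (0 : ℝ), 0 ≤ a z) (hz₀ : 0 < z₀)
    (hfin : IntegrableOn (fun z => 1 / b z + a z) (Ioi z₀)) :
    IntegrableOn (fun z => 1 / b z) (Ioi z₀) ∧ IntegrableOn a (Ioi z₀) := by
  have hsub : Ioi z₀ ⊆ Ioi 0 := Ioi_subset_Ioi hz₀.le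
  refine (integrable_add_iff_of_nonneg ?_ ?_ ?_).1 hfin
  · exact ((continuousOn_const.div hb_cont fun z hz => (hb z hz).ne').mono hsub)
      |>.aestronglyMeasurable measurableSet_Ioi
  · exact ae_restrict_of_forall_mem measurableSet_Ioi fun z hz =>
      (one_div_pos.2 (hb z (hsub hz))).le
  · exact ae_restrict_of_forall_mem measurableSet_Ioi fun z hz => ha z (hsub hz)

theorem integrableOn_one_div_Ici (hb_cont : ContinuousOn b (Ioi 0))
    (hb : ∀ z ∈ Ioi (0 : ℝ), 0 < b z) (hb_inv : IntegrableOn (fun z => 1 / b z) (Ioi z₀))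
    {z : ℝ} (hz : 0 < z) : IntegrableOn (fun z => 1 / b z) (Ici z) := by
  have hsub : Icc z z₀ ⊆ Ioi 0 := fun t ht => hz.trans_le ht.1
  exact integrableOn_Ici_of_continuousOn_Icc
    ((continuousOn_const.div hb_cont fun t ht => (hb t ht).ne').mono hsub) hb_inv

end Weights

noncomputable def cutoff (z₀ z : ℝ) : ℝ :=
  Real.smoothTransition (z - z₀)

section Cutoff

variable {z₀ z : ℝ}

theorem contDiff_cutoff : ContDiff ℝ 1 (cutoff z₀) :=
  Real.smoothTransition.contDiff.comp (contDiff_id.sub contDiff_const)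

theorem cutoff_eq_zero (h : z ≤ z₀) : cutoff z₀ z = 0 :=
  Real.smoothTransition.zero_of_nonpos (by linarith)

theorem cutoff_eq_one (h : z₀ + 1 ≤ z) : cutoff z₀ z = 1 :=
  Real.smoothTransition.one_of_one_le (by linarith)

theorem deriv_cutoff_eq_zero (h : z ∉ Icc z₀ (z₀ + 1)) : deriv (cutoff z₀) z = 0 := by
  rcases not_and_or.1 h with h | h
  · have : cutoff z₀ =ᶠ[𝓝 z] fun _ => 0 := by
      filter_upwards [Iio_mem_nhds (not_le.1 h)] with t ht using cutoff_eq_zero ht.le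
    rw [this.deriv_eq, deriv_const]
  · have : cutoff z₀ =ᶠ[𝓝 z] fun _ => 1 := by
      filter_upwards [Ioi_mem_nhds (not_le.1 h)] with t ht using cutoff_eq_one ht.le
    rw [this.deriv_eq, deriv_const]

theorem tendsto_cutoff : Tendsto (cutoff z₀) atTop (𝓝 1) :=
  tendsto_const_nhds.congr' <|
    (eventually_ge_atTop (z₀ + 1)).mono fun _ h => (cutoff_eq_one h).symm

theorem finiteEnergy_cutoff {a b : ℝ → ℝ} (hb_cont : ContinuousOn b (Ioi 0)) (hz₀ : 0 < z₀)
    (ha_int : IntegrableOn a (Ioi z₀)) :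
    FiniteEnergy a b (cutoff z₀) := by
  have hdiff := contDiff_cutoff (z₀ := z₀)
  refine ⟨(hdiff.differentiable one_ne_zero).differentiableOn, IntegrableOn.add ?_ ?_⟩
  · have hsub : Icc z₀ (z₀ + 1) ⊆ Ioi 0 := fun t ht => hz₀.trans_le ht.1
    have hIcc : IntegrableOn (fun z => b z * deriv (cutoff z₀) z ^ 2) (Icc z₀ (z₀ + 1)) :=
      ((hb_cont.mono hsub).mul ((hdiff.continuous_deriv le_rfl).continuousOn.pow 2))
        |>.integrableOn_compact isCompact_Icc
    exact hIcc.of_forall_sdiff_eq_zero measurableSet_Ioi fun t ht => by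
      simp [deriv_cutoff_eq_zero ht.2]
  · have hbdd : ∀ t, ‖cutoff z₀ t ^ 2‖ ≤ 1 := fun t => by
      rw [Real.norm_of_nonneg (sq_nonneg _)]
      exact pow_le_one₀ (Real.smoothTransition.nonneg _) (Real.smoothTransition.le_one _)
    have hIoi : IntegrableOn (fun z => a z * cutoff z₀ z ^ 2) (Ioi z₀) :=
      ha_int.mul_bdd (hdiff.continuous.pow 2).aestronglyMeasurable (Eventually.of_forall hbdd)
    exact hIoi.of_forall_sdiff_eq_zero measurableSet_Ioi fun t ht => by
      simp [cutoff_eq_zero (not_lt.1 ht.2)]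

end Cutoff

theorem exists_pos_le_energy_of_tendsto_one {a b : ℝ → ℝ} (hb_cont : ContinuousOn b (Ioi 0))
    (ha : ∀ z ∈ Ioi (0 : ℝ), 0 < a z) (hb : ∀ z ∈ Ioi (0 : ℝ), 0 < b z) {z₀ : ℝ} (hz₀ : 0 < z₀)
    (hb_inv : IntegrableOn (fun z => 1 / b z) (Ioi z₀)) (ha_int : IntegrableOn a (Ioi z₀)) :
    ∃ ε > 0, ∀ w, FiniteEnergy a b w → Tendsto w atTop (𝓝 1) → ε ≤ energy a b w := by
  have ha' : ∀ z ∈ Ioi (0 : ℝ), 0 ≤ a z := fun z hz => (ha z hz).le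
  have hsub : Ioi z₀ ⊆ Ioi 0 := Ioi_subset_Ioi hz₀.le
  set A := ∫ z in Ioi z₀, a z
  set B := ∫ z in Ioi z₀, 1 / b z
  have hA : 0 < A := by
    rw [setIntegral_pos_iff_support_of_nonneg_ae
      (ae_restrict_of_forall_mem measurableSet_Ioi fun z hz => ha' z (hsub hz)) ha_int,
      inter_eq_right.2 fun z hz => Function.mem_support.2 (ha z (hsub hz)).ne', Real.volume_Ioi]
    exact ENNReal.zero_lt_top
  have hB : 0 ≤ B :=
    setIntegral_nonneg measurableSet_Ioi fun z hz => (one_div_pos.2 (hb z (hsub hz))).le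
  set c := 2 * B + 1
  have hc : 0 < c := by positivity
  refine ⟨min (A / 16) c⁻¹, by positivity, fun w hw hlim => ?_⟩
  by_contra! hE
  -- `ε ≤ A / 16` makes `w` small somewhere beyond `z₀`; `ε ≤ c⁻¹` makes it oscillate by `< 3 / 4`
  obtain ⟨z, hz, hwz⟩ := exists_lt_div_of_setIntegral_mul_lt measurableSet_Ioi
    (fun z hz => ha' z (hsub hz)) ha_int ((hw.integrableOn_mul_sq hb_cont ha' hb).mono_set hsub) hA
    ((hw.setIntegral_le_energy (hw.integrableOn_mul_sq hb_cont ha' hb)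
      (fun t ht => by have := ha' t ht; positivity)
      (fun t ht => le_add_of_nonneg_left (by have := hb t ht; positivity)) hsub).trans_lt hE)
  have hwz_small : |w z| < 1 / 4 := by
    refine abs_lt_of_sq_lt_sq (hwz.trans_le ?_) (by norm_num)
    rw [div_le_iff₀ hA]
    linarith [min_le_left (A / 16) c⁻¹]
  have hosc : |1 - w z| ≤ (c * energy a b w + c⁻¹ * B) / 2 := by
    have hz0 : 0 < z := hz₀.trans hz
    refine (hw.abs_sub_le hb_cont ha' hb hz0 (hb_inv.mono_set (Ioi_subset_Ioi hz.le)) hlim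
      hc).trans ?_
    gcongr
    exact setIntegral_mono_set hb_inv
      (ae_restrict_of_forall_mem measurableSet_Ioi fun t ht => (one_div_pos.2 (hb t (hsub ht))).le)
      (Ioi_subset_Ioi hz.le).eventuallyLE
  have hcE : c * energy a b w < 1 := by
    calc c * energy a b w < c * c⁻¹ := mul_lt_mul_of_pos_left (hE.trans_le (min_le_right _ _)) hc
      _ = 1 := mul_inv_cancel₀ hc.ne'
  have hcB : c⁻¹ * B < 1 / 2 := by
    rw [inv_mul_lt_iff₀ hc]; linarith
  have := abs_sub_abs_le_abs_sub 1 (w z)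
  rw [abs_one] at this
  linarith

/-- If `∫^∞ (1/b + a) < ∞`, then every finite-energy `u`
(`∫ (b|u'|² + a|u|²) < ∞`) has `u'` integrable on `[z', ∞)` for each `z' > 0` and
`u(z)` has a (possibly nonzero) limit at infinity; consequently the compactly
supported finite-energy functions are NOT dense in the energy space. -/
theorem stmt17
    (a b : ℝ → ℝ)
    (hb_cont : ContinuousOn b (Set.Ioi (0 : ℝ)))
    (hb_pos : ∀ z ∈ Set.Ioi (0 : ℝ), 0 < b z)
    (ha_pos : ∀ z ∈ Set.Ioi (0 : ℝ), 0 < a z)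
    (ha_loc : LocallyIntegrableOn a (Set.Ioi (0 : ℝ)))
    (z₀ : ℝ) (hz₀ : 0 < z₀)
    (hfin : IntegrableOn (fun z => 1 / b z + a z) (Set.Ioi z₀)) :
    (∀ u : ℝ → ℝ, DifferentiableOn ℝ u (Set.Ioi 0) →
      IntegrableOn (fun z => b z * (deriv u z) ^ 2 + a z * (u z) ^ 2) (Set.Ioi 0) →
      (∀ z' > (0 : ℝ), IntegrableOn (deriv u) (Set.Ici z')) ∧
      (∃ L : ℝ, Tendsto u atTop (nhds L))) ∧
    (∃ u : ℝ → ℝ,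
      (DifferentiableOn ℝ u (Set.Ioi 0) ∧
        IntegrableOn (fun z => b z * (deriv u z) ^ 2 + a z * (u z) ^ 2) (Set.Ioi 0)) ∧
      ∃ ε > (0 : ℝ), ∀ v : ℝ → ℝ,
        (DifferentiableOn ℝ v (Set.Ioi 0) ∧
          IntegrableOn (fun z => b z * (deriv v z) ^ 2 + a z * (v z) ^ 2) (Set.Ioi 0)) →
        HasCompactSupport v →
        ε ≤ ∫ z in Set.Ioi (0 : ℝ),
          (b z * (deriv u z - deriv v z) ^ 2 + a z * (u z - v z) ^ 2)) := by
  have ha : ∀ z ∈ Ioi (0 : ℝ), 0 ≤ a z := fun z hz => (ha_pos z hz).le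
  obtain ⟨hb_inv, ha_int⟩ :=
    integrableOn_one_div_and_integrableOn_of_add hb_cont hb_pos ha hz₀ hfin
  have hW : FiniteEnergy a b (cutoff z₀) := finiteEnergy_cutoff hb_cont hz₀ ha_int
  obtain ⟨ε, hε, hle⟩ :=
    exists_pos_le_energy_of_tendsto_one hb_cont ha_pos hb_pos hz₀ hb_inv ha_int
  refine ⟨fun u hud hui => ?_, cutoff z₀, hW, ε, hε, fun v hv hsupp => ?_⟩
  · have hu : FiniteEnergy a b u := ⟨hud, hui⟩
    exact ⟨fun z' hz' => hu.integrableOn_deriv hb_cont ha hb_pos measurableSet_Ici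
      (Ici_subset_Ioi.2 hz') (integrableOn_one_div_Ici hb_cont hb_pos hb_inv hz'),
      hu.exists_tendsto hb_cont ha hb_pos hz₀ hb_inv⟩
  · have hlim : Tendsto (fun z => cutoff z₀ z - v z) atTop (𝓝 1) := by
      simpa using (tendsto_cutoff (z₀ := z₀)).sub
        (hsupp.is_zero_at_infty.mono_left atTop_le_cocompact)
    calc ε ≤ energy a b (cutoff z₀ - v) :=
          hle _ (hW.sub hb_cont ha_loc.aestronglyMeasurable ha hb_pos hv) hlim
      _ = _ := setIntegral_congr_fun measurableSet_Ioi (energyDensity_sub_eqOn hW.1 hv.1)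
end

section
/- Let $b : (0,\infty) \to (0,\infty)$ be continuous with $\int_{z'}^{\infty} 1/b(z)\,dz < \infty$ and let $a$ be positive with $\int^{\infty} a(z)\,dz = \infty$. If $u \in H^1_{loc}$ satisfies $\int_0^\infty(b|u'|^2 + a|u|^2)\,dz < \infty$, then $\lim_{z\to\infty} u(z) = 0$ and hence $|u(z)| \le \sqrt{\beta_0(z)}\,(\int_z^\infty b|u'|^2)^{1/2}$ where $\beta_0(z) = \int_z^\infty 1/b$. -/
open MeasureTheory Set Filter Topology

/-!
Cauchy–Schwarz with weight `b` gives `∫ |u'| ≤ (∫ 1/b)^{1/2} (∫ b u'^2)^{1/2}` on `(z', ∞)`,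
so `u'` is integrable there and `u` has a limit `L` at infinity. If `L ≠ 0`, then `u² > L²/2` near
infinity, so `a ≤ (2/L²) a u²` would be integrable there; hence `L = 0`. Then
`u z = -∫_z^∞ u'`, and the same Cauchy–Schwarz inequality gives the bound.
-/

section WeightedCauchySchwarz

variable {α : Type*} [MeasurableSpace α] {μ : Measure α}

theorem memLp_two_sqrt {g : α → ℝ} (hg_nonneg : 0 ≤ᵐ[μ] g) (hg : Integrable g μ) :
    MemLp (fun x => √(g x)) 2 μ := by
  refine (memLp_two_iff_integrable_sq
    (Real.continuous_sqrt.comp_aestronglyMeasurable hg.aestronglyMeasurable)).2 (hg.congr ?_)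
  filter_upwards [hg_nonneg] with x hx
  rw [Real.sq_sqrt hx]

variable {w f : α → ℝ}

theorem sqrt_one_div_mul_sqrt_mul_sq (hw : ∀ᵐ x ∂μ, 0 < w x) :
    (fun x => √(1 / w x) * √(w x * f x ^ 2)) =ᵐ[μ] fun x => |f x| := by
  filter_upwards [hw] with x hx
  rw [← Real.sqrt_mul (by positivity), ← mul_assoc, one_div_mul_cancel hx.ne', one_mul,
    Real.sqrt_sq_eq_abs]

theorem integrable_of_integrable_one_div_of_integrable_mul_sq (hw : ∀ᵐ x ∂μ, 0 < w x)
    (hf : AEStronglyMeasurable f μ) (hw_inv : Integrable (fun x => 1 / w x) μ)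
    (hwf : Integrable (fun x => w x * f x ^ 2) μ) : Integrable f μ := by
  have := (memLp_two_sqrt (by filter_upwards [hw] with x hx; positivity) hw_inv).integrable_mul
    (memLp_two_sqrt (by filter_upwards [hw] with x hx; positivity) hwf)
  exact (integrable_norm_iff hf).1 (this.congr (sqrt_one_div_mul_sqrt_mul_sq hw))

theorem integral_abs_le_sqrt_integral_one_div_mul_sqrt (hw : ∀ᵐ x ∂μ, 0 < w x)
    (hw_inv : Integrable (fun x => 1 / w x) μ) (hwf : Integrable (fun x => w x * f x ^ 2) μ) :
    ∫ x, |f x| ∂μ ≤ √(∫ x, 1 / w x ∂μ) * √(∫ x, w x * f x ^ 2 ∂μ) := by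
  have hw_inv_nonneg : 0 ≤ᵐ[μ] fun x => 1 / w x := by filter_upwards [hw] with x hx; positivity
  have hwf_nonneg : 0 ≤ᵐ[μ] fun x => w x * f x ^ 2 := by
    filter_upwards [hw] with x hx; positivity
  have h := integral_mul_le_Lp_mul_Lq_of_nonneg Real.HolderConjugate.two_two
    (Eventually.of_forall fun x => Real.sqrt_nonneg _)
    (Eventually.of_forall fun x => Real.sqrt_nonneg _)
    (by rw [ENNReal.ofReal_ofNat]; exact memLp_two_sqrt hw_inv_nonneg hw_inv)
    (by rw [ENNReal.ofReal_ofNat]; exact memLp_two_sqrt hwf_nonneg hwf)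
  rw [integral_congr_ae (sqrt_one_div_mul_sqrt_mul_sq hw)] at h
  convert h using 2 <;> rw [Real.sqrt_eq_rpow] <;> congr 1 <;> refine integral_congr_ae ?_
  · filter_upwards [hw_inv_nonneg] with x hx
    rw [Real.rpow_two, Real.sq_sqrt hx]
  · filter_upwards [hwf_nonneg] with x hx
    rw [Real.rpow_two, Real.sq_sqrt hx]

end WeightedCauchySchwarz

theorem exists_integrableOn_Ioi_of_tendsto_ne_zero {μ : Measure ℝ} {a u : ℝ → ℝ} {L t₀ : ℝ}
    (hu : Tendsto u atTop (𝓝 L)) (hL : L ≠ 0)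
    (hu_meas : AEStronglyMeasurable u (μ.restrict (Ioi t₀))) (ha : ∀ z > t₀, 0 ≤ a z)
    (hau : IntegrableOn (fun z => a z * u z ^ 2) (Ioi t₀) μ) :
    ∃ T ≥ t₀, IntegrableOn a (Ioi T) μ := by
  have hL2 : 0 < L ^ 2 := by positivity
  have h_far : ∀ᶠ z in atTop, L ^ 2 / 2 < u z ^ 2 ∧ t₀ ≤ z :=
    ((hu.pow 2).eventually (lt_mem_nhds (by linarith))).and (eventually_ge_atTop t₀)
  obtain ⟨T, hT⟩ := h_far.exists_forall_of_atTop
  have hTt₀ : t₀ ≤ T := (hT T le_rfl).2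
  refine ⟨T, hTt₀, ?_⟩
  have ha_eq : (fun z => a z * u z ^ 2 / u z ^ 2) =ᵐ[μ.restrict (Ioi T)] a :=
    ae_restrict_of_forall_mem measurableSet_Ioi fun z hz =>
      mul_div_cancel_right₀ _ (by nlinarith [(hT z hz.le).1])
  have ha_meas : AEStronglyMeasurable a (μ.restrict (Ioi T)) :=
    ((hau.aestronglyMeasurable.aemeasurable.div
      (hu_meas.aemeasurable.pow_const 2)).aestronglyMeasurable.mono_set
        (Ioi_subset_Ioi hTt₀)).congr ha_eq
  refine ((hau.mono_set (Ioi_subset_Ioi hTt₀)).const_mul (2 / L ^ 2)).mono' ha_meas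
    (ae_restrict_of_forall_mem measurableSet_Ioi fun z hz => ?_)
  have haz := ha z (hTt₀.trans_lt hz)
  rw [Real.norm_of_nonneg haz, div_mul_eq_mul_div, le_div_iff₀ hL2]
  nlinarith [mul_le_mul_of_nonneg_left (hT z hz.le).1.le haz]

theorem tendsto_atTop_zero_of_integrableOn_mul_sq {a u u' : ℝ → ℝ} {c : ℝ}
    (hderiv : ∀ x ∈ Ioi c, HasDerivAt u (u' x) x) (hu' : IntegrableOn u' (Ioi c))
    (ha : ∀ x > c, 0 ≤ a x) (hau : IntegrableOn (fun x => a x * u x ^ 2) (Ioi c))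
    (ha_div : ∀ t ≥ c, ¬ IntegrableOn a (Ioi t)) :
    Tendsto u atTop (𝓝 0) := by
  have hu_lim := tendsto_limUnder_of_hasDerivAt_of_integrableOn_Ioi hderiv hu'
  have hu_cont : ContinuousOn u (Ioi c) := fun x hx =>
    (hderiv x hx).continuousAt.continuousWithinAt
  suffices limUnder atTop u = 0 from this ▸ hu_lim
  by_contra hL
  obtain ⟨T, hT, haT⟩ := exists_integrableOn_Ioi_of_tendsto_ne_zero hu_lim hL
    (hu_cont.aestronglyMeasurable measurableSet_Ioi) ha hau
  exact ha_div T hT haT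

theorem abs_le_sqrt_integral_one_div_mul_sqrt {b u u' : ℝ → ℝ} {c : ℝ}
    (hderiv : ∀ x ∈ Ici c, HasDerivAt u (u' x) x) (hu' : IntegrableOn u' (Ioi c))
    (hu_lim : Tendsto u atTop (𝓝 0)) (hb : ∀ x > c, 0 < b x)
    (hb_inv : IntegrableOn (fun x => 1 / b x) (Ioi c))
    (hbu' : IntegrableOn (fun x => b x * u' x ^ 2) (Ioi c)) :
    |u c| ≤ √(∫ x in Ioi c, 1 / b x) * √(∫ x in Ioi c, b x * u' x ^ 2) := by
  have hFTC : ∫ x in Ioi c, u' x = 0 - u c :=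
    integral_Ioi_of_hasDerivAt_of_tendsto' hderiv hu' hu_lim
  calc |u c| = |∫ x in Ioi c, u' x| := by rw [hFTC, zero_sub, abs_neg]
    _ ≤ ∫ x in Ioi c, |u' x| := abs_integral_le_integral_abs
    _ ≤ _ := integral_abs_le_sqrt_integral_one_div_mul_sqrt
      (ae_restrict_of_forall_mem measurableSet_Ioi hb) hb_inv hbu'

theorem stmt18_general
    (a b u u' : ℝ → ℝ) (z' : ℝ) (hz' : 0 < z')
    (hb_pos : ∀ z ∈ Set.Ioi (0 : ℝ), 0 < b z)
    (ha_pos : ∀ z ∈ Set.Ioi (0 : ℝ), 0 < a z)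
    (hb_int : IntegrableOn (fun z => 1 / b z) (Set.Ioi z'))
    (ha_div : ∀ t > (0 : ℝ), ¬ IntegrableOn a (Set.Ioi t))
    (hu : ∀ z ∈ Set.Ioi (0 : ℝ), HasDerivAt u (u' z) z)
    (hu_energy : IntegrableOn (fun z => b z * (u' z) ^ 2 + a z * (u z) ^ 2)
      (Set.Ioi (0 : ℝ))) :
    Tendsto u atTop (nhds 0) ∧
    ∀ z, z' ≤ z →
      |u z| ≤ Real.sqrt (∫ s in Set.Ioi z, 1 / b s) *
        Real.sqrt (∫ s in Set.Ioi z, b s * (u' s) ^ 2) := by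
  have hz'_sub : Ioi z' ⊆ Ioi 0 := Ioi_subset_Ioi hz'.le
  have hb_meas : AEStronglyMeasurable b (volume.restrict (Ioi z')) :=
    hb_int.aestronglyMeasurable.aemeasurable.inv.aestronglyMeasurable.congr
      (Eventually.of_forall fun z => by simp)
  have hu'_meas : AEStronglyMeasurable u' (volume.restrict (Ioi z')) :=
    (measurable_deriv u).aestronglyMeasurable.congr
      (ae_restrict_of_forall_mem measurableSet_Ioi fun z hz => (hu z (hz'_sub hz)).deriv)
  obtain ⟨hbu', hau⟩ : IntegrableOn (fun z => b z * u' z ^ 2) (Ioi z') volume ∧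
      IntegrableOn (fun z => a z * u z ^ 2) (Ioi z') volume :=
    (integrable_add_iff_of_nonneg (f := fun z => b z * u' z ^ 2) (hb_meas.mul (hu'_meas.pow 2))
      (ae_restrict_of_forall_mem measurableSet_Ioi fun z hz =>
        mul_nonneg (hb_pos z (hz'_sub hz)).le (sq_nonneg _))
      (ae_restrict_of_forall_mem measurableSet_Ioi fun z hz =>
        mul_nonneg (ha_pos z (hz'_sub hz)).le (sq_nonneg _))).1 (hu_energy.mono_set hz'_sub)
  have hu'_int : IntegrableOn u' (Ioi z') :=
    integrable_of_integrable_one_div_of_integrable_mul_sq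
      (ae_restrict_of_forall_mem measurableSet_Ioi fun z hz => hb_pos z (hz'_sub hz))
      hu'_meas hb_int hbu'
  have hu_lim : Tendsto u atTop (𝓝 0) :=
    tendsto_atTop_zero_of_integrableOn_mul_sq (fun z hz => hu z (hz'_sub hz)) hu'_int
      (fun z hz => (ha_pos z (hz'_sub hz)).le) hau fun t ht => ha_div t (hz'.trans_le ht)
  refine ⟨hu_lim, fun z hz => ?_⟩
  have hz_sub : Ioi z ⊆ Ioi z' := Ioi_subset_Ioi hz
  exact abs_le_sqrt_integral_one_div_mul_sqrt (fun s hs => hu s (hz'.trans_le (hz.trans hs)))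
    (hu'_int.mono_set hz_sub) hu_lim (fun s hs => hb_pos s (hz'.trans_le (hz.trans hs.le)))
    (hb_int.mono_set hz_sub) (hbu'.mono_set hz_sub)

/-- If `∫_{z'}^∞ 1/b < ∞` and `∫^∞ a = ∞`, then any finite-energy
`u` (`∫ (b|u'|² + a|u|²) < ∞`) tends to `0` at infinity and satisfies the bound
`|u z| ≤ √(β₀ z) (∫_z^∞ b|u'|²)^{1/2}` where `β₀ z = ∫_z^∞ 1/b`. -/
theorem stmt18
    (a b u u' : ℝ → ℝ) (z' : ℝ) (hz' : 0 < z')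
    (hb_cont : ContinuousOn b (Set.Ioi (0 : ℝ)))
    (hb_pos : ∀ z ∈ Set.Ioi (0 : ℝ), 0 < b z)
    (ha_pos : ∀ z ∈ Set.Ioi (0 : ℝ), 0 < a z)
    (hb_int : IntegrableOn (fun z => 1 / b z) (Set.Ioi z'))
    (ha_div : ∀ t > (0 : ℝ), ¬ IntegrableOn a (Set.Ioi t))
    (hu : ∀ z ∈ Set.Ioi (0 : ℝ), HasDerivAt u (u' z) z)
    (hu_energy : IntegrableOn (fun z => b z * (u' z) ^ 2 + a z * (u z) ^ 2)
      (Set.Ioi (0 : ℝ))) :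
    Tendsto u atTop (nhds 0) ∧
    ∀ z, z' ≤ z →
      |u z| ≤ Real.sqrt (∫ s in Set.Ioi z, 1 / b s) *
        Real.sqrt (∫ s in Set.Ioi z, b s * (u' s) ^ 2) :=
  stmt18_general a b u u' z' hz' hb_pos ha_pos hb_int ha_div hu hu_energy
end
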